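/- arXiv:2605.08746 — 2 statements merged into one kernel-verified Lean document; each statement's English description precedes it below -/
import Mathlib

section
/- Let M : ℝ^{k×n} → ℝ^{k×n} be self-adjoint positive semidefinite (Frobenius inner product), with temporal reduction M_temp ∈ ℝ^{k×k} and spatial reduction M_space ∈ ℝ^{n×n} (the normalized partial traces over the second and first factors respectively). Then for every E ∈ ℝ^{k×n}, the matrix δh := M(E) satisfies rank(δh) ≤ min(rank(M_temp), rank(M_space)). -/
open Matrix

lemma cs_aux {c b : ℝ} (hb : 0 ≤ b) (h : ∀ t : ℝ, 0 ≤ 2 * t * c + t ^ 2 * b) : c = 0 := by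
  rcases eq_or_lt_of_le hb with hb0 | hb0
  · have h1 := h 1
    have h2 := h (-1)
    rw [← hb0] at h1 h2
    nlinarith
  · have ht := h (-c / b)
    have hb' : b ≠ 0 := ne_of_gt hb0
    rw [div_pow, neg_pow] at ht
    have key : 0 ≤ -(c^2) / b := by
      have : 2 * (-c / b) * c + (-1)^2 * c ^ 2 / b ^ 2 * b = -(c^2)/b := by
        field_simp; ring
      linarith [this ▸ ht]
    have : 0 ≤ -(c^2) := by
      have := (div_nonneg_iff.mp key)
      rcases this with ⟨h1, _⟩ | ⟨_, h2⟩
      · exact h1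
      · linarith
    nlinarith [sq_nonneg c]

lemma rank_le_of_ker {m m' r : ℕ} (A : Matrix (Fin m) (Fin r) ℝ) (B : Matrix (Fin m') (Fin r) ℝ)
    (h : ∀ w, A *ᵥ w = 0 → B *ᵥ w = 0) : B.rank ≤ A.rank := by
  have hk : LinearMap.ker A.mulVecLin ≤ LinearMap.ker B.mulVecLin := by
    intro w hw
    simp only [LinearMap.mem_ker, mulVecLin_apply] at *
    exact h w hw
  have h1 := A.mulVecLin.finrank_range_add_finrank_ker
  have h2 := B.mulVecLin.finrank_range_add_finrank_ker
  have h3 : Module.finrank ℝ (LinearMap.ker A.mulVecLin) ≤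
      Module.finrank ℝ (LinearMap.ker B.mulVecLin) :=
    Submodule.finrank_mono hk
  simp only [Matrix.rank, Module.finrank_fin_fun] at *
  omega

lemma dot_sum {α : Type*} [Fintype α] {m : ℕ} (w : Fin m → ℝ) (f : α → Fin m → ℝ) :
    w ⬝ᵥ ∑ a, f a = ∑ a, w ⬝ᵥ f a := by
  simp only [dotProduct, Finset.sum_apply, Finset.mul_sum]
  rw [Finset.sum_comm]

/-- For a self-adjoint PSD operator `M` on `ℝ^{k×n}` (Frobenius inner
product), with temporal reduction `Mtemp u = (1/n) Σ_j (M(u e_jᵀ)) e_j` and spatial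
reduction `Mspace v = (1/k) Σ_i (M(f_i vᵀ))ᵀ f_i` (standard orthonormal bases), every
correction `δh = M(E)` satisfies `rank(δh) ≤ min(rank Mtemp, rank Mspace)`. -/
theorem stmt_9 {k n : ℕ}
    (M : Matrix (Fin k) (Fin n) ℝ →ₗ[ℝ] Matrix (Fin k) (Fin n) ℝ)
    (hsa : ∀ A B : Matrix (Fin k) (Fin n) ℝ, (Aᵀ * M B).trace = ((M A)ᵀ * B).trace)
    (hpsd : ∀ A : Matrix (Fin k) (Fin n) ℝ, 0 ≤ (Aᵀ * M A).trace)
    (Mtemp : Matrix (Fin k) (Fin k) ℝ)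
    (hMtemp : ∀ u : Fin k → ℝ,
      Mtemp *ᵥ u = (1 / (n : ℝ)) •
        ∑ j : Fin n, (M (vecMulVec u (Pi.single j 1))) *ᵥ (Pi.single j 1))
    (Mspace : Matrix (Fin n) (Fin n) ℝ)
    (hMspace : ∀ v : Fin n → ℝ,
      Mspace *ᵥ v = (1 / (k : ℝ)) •
        ∑ i : Fin k, (M (vecMulVec (Pi.single i 1) v))ᵀ *ᵥ (Pi.single i 1))
    (E : Matrix (Fin k) (Fin n) ℝ) :
    (M E).rank ≤ min Mtemp.rank Mspace.rank := by
  -- symmetry of the bilinear form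
  have hsymm : ∀ A B : Matrix (Fin k) (Fin n) ℝ,
      (Bᵀ * M A).trace = (Aᵀ * M B).trace := by
    intro A B
    rw [hsa A B, ← trace_transpose ((M A)ᵀ * B), transpose_mul, transpose_transpose]
  -- expansion of the quadratic form
  have hbil : ∀ (A B : Matrix (Fin k) (Fin n) ℝ) (t : ℝ),
      ((A + t • B)ᵀ * M (A + t • B)).trace
        = (Aᵀ * M A).trace + (2 * t * (Aᵀ * M B).trace + t ^ 2 * (Bᵀ * M B).trace) := by
    intro A B t
    simp only [map_add, LinearMap.map_smul, transpose_add, transpose_smul, Matrix.add_mul,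
      Matrix.mul_add, Matrix.smul_mul, Matrix.mul_smul, trace_add, trace_smul, smul_eq_mul]
    rw [hsymm A B]
    ring
  -- Cauchy-Schwarz-type consequence
  have hCS : ∀ A : Matrix (Fin k) (Fin n) ℝ,
      (Aᵀ * M A).trace = 0 → (Aᵀ * M E).trace = 0 := by
    intro A h0
    apply cs_aux (hpsd E)
    intro t
    have h := hpsd (A + t • E)
    rwa [hbil A E t, h0, zero_add] at h
  -- trace identities
  have htrL : ∀ (w : Fin k → ℝ) (j : Fin n) (X : Matrix (Fin k) (Fin n) ℝ),
      ((vecMulVec w (Pi.single j 1))ᵀ * X).trace = (Xᵀ *ᵥ w) j := by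
    intro w j X
    simp [trace, mul_apply, vecMulVec_apply, mulVec, dotProduct, Pi.single_apply, diag,
      Finset.sum_comm (γ := Fin n), mul_comm]
  have htrR : ∀ (v : Fin n → ℝ) (i : Fin k) (X : Matrix (Fin k) (Fin n) ℝ),
      ((vecMulVec (Pi.single i 1) v)ᵀ * X).trace = (X *ᵥ v) i := by
    intro v i X
    simp [trace, mul_apply, vecMulVec_apply, mulVec, dotProduct, Pi.single_apply, diag, mul_comm]
  -- dot product identities
  have hdL : ∀ (w : Fin k → ℝ) (j : Fin n) (X : Matrix (Fin k) (Fin n) ℝ),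
      w ⬝ᵥ (X *ᵥ Pi.single j 1) = (Xᵀ *ᵥ w) j := by
    intro w j X
    simp [dotProduct, mulVec, Pi.single_apply, mul_comm]
  have hdR : ∀ (v : Fin n → ℝ) (i : Fin k) (X : Matrix (Fin k) (Fin n) ℝ),
      v ⬝ᵥ (Xᵀ *ᵥ Pi.single i 1) = (X *ᵥ v) i := by
    intro v i X
    simp [dotProduct, mulVec, Pi.single_apply, mul_comm]
  -- temporal kernel inclusion
  have htemp : ∀ w, Mtemp *ᵥ w = 0 → (M E)ᵀ *ᵥ w = 0 := by
    intro w hw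
    funext j
    have hn : (0:ℝ) < n := by exact_mod_cast j.pos
    set A : Fin n → Matrix (Fin k) (Fin n) ℝ := fun j' => vecMulVec w (Pi.single j' 1) with hA
    have h0 : (1 / (n:ℝ)) • ∑ j', (M (A j')) *ᵥ Pi.single j' 1 = 0 := by
      rw [← hMtemp w, hw]
    have h1 : ∑ j' : Fin n, (M (A j')) *ᵥ Pi.single j' 1 = 0 := by
      have hne : (1 / (n:ℝ)) ≠ 0 := by positivity
      exact (smul_eq_zero.mp h0).resolve_left hne
    have hsum : ∑ j' : Fin n, ((A j')ᵀ * M (A j')).trace = 0 := by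
      have h2 := congrArg (fun x => w ⬝ᵥ x) h1
      simp only [dot_sum, dotProduct_zero] at h2
      rw [← h2]
      refine Finset.sum_congr rfl fun j' _ => ?_
      rw [hdL w j' (M (A j')), ← htrL w j' (M (A j'))]
    have hterm : ∀ j' : Fin n, ((A j')ᵀ * M (A j')).trace = 0 := by
      intro j'
      exact (Finset.sum_eq_zero_iff_of_nonneg (fun j' _ => hpsd (A j'))).mp hsum j'
        (Finset.mem_univ _)
    have := hCS (A j) (hterm j)
    rw [htrL w j (M E)] at this
    simpa using this
  -- spatial kernel inclusion
  have hspace : ∀ v, Mspace *ᵥ v = 0 → (M E) *ᵥ v = 0 := by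
    intro v hv
    funext i
    have hk0 : (0:ℝ) < k := by exact_mod_cast i.pos
    set A : Fin k → Matrix (Fin k) (Fin n) ℝ := fun i' => vecMulVec (Pi.single i' 1) v with hA
    have h0 : (1 / (k:ℝ)) • ∑ i', (M (A i'))ᵀ *ᵥ Pi.single i' 1 = 0 := by
      rw [← hMspace v, hv]
    have h1 : ∑ i' : Fin k, (M (A i'))ᵀ *ᵥ Pi.single i' 1 = 0 := by
      have hne : (1 / (k:ℝ)) ≠ 0 := by positivity
      exact (smul_eq_zero.mp h0).resolve_left hne
    have hsum : ∑ i' : Fin k, ((A i')ᵀ * M (A i')).trace = 0 := by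
      have h2 := congrArg (fun x => v ⬝ᵥ x) h1
      simp only [dot_sum, dotProduct_zero] at h2
      rw [← h2]
      refine Finset.sum_congr rfl fun i' _ => ?_
      rw [hdR v i' (M (A i')), ← htrR v i' (M (A i'))]
    have hterm : ∀ i' : Fin k, ((A i')ᵀ * M (A i')).trace = 0 := by
      intro i'
      exact (Finset.sum_eq_zero_iff_of_nonneg (fun i' _ => hpsd (A i'))).mp hsum i'
        (Finset.mem_univ _)
    have := hCS (A i) (hterm i)
    rw [htrR v i (M E)] at this
    simpa using this
  refine le_min ?_ ?_
  · calc (M E).rank = (M E)ᵀ.rank := (Matrix.rank_transpose (M E)).symm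
      _ ≤ Mtemp.rank := rank_le_of_ker Mtemp (M E)ᵀ htemp
  · exact rank_le_of_ker Mspace (M E) hspace
end

section
/- Let M : ℝ^{k×n} → ℝ^{k×n} be self-adjoint PSD with temporal reduction M_temp. Then for every E ∈ ℝ^{k×n} and every u ∈ ker(M_temp), u^T M(E) = 0; consequently the column space of M(E) is contained in the image of M_temp. -/
open Matrix

/-- Trace pairing against `vecMulVec u (Pi.single j 1)` extracts the `j`-th entry
of `u ᵥ* X`. -/
lemma trace_vecMulVec_single {k n : ℕ} (u : Fin k → ℝ) (j : Fin n)
    (X : Matrix (Fin k) (Fin n) ℝ) :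
    ((vecMulVec u (Pi.single j 1))ᵀ * X).trace = (u ᵥ* X) j := by
  classical
  simp only [Matrix.trace, Matrix.diag, Matrix.mul_apply, Matrix.transpose_apply,
    vecMulVec_apply, Matrix.vecMul, dotProduct]
  rw [Finset.sum_comm]
  simp [Pi.single_apply, mul_comm]

lemma dot_mulVec_single {k n : ℕ} (u : Fin k → ℝ) (j : Fin n)
    (X : Matrix (Fin k) (Fin n) ℝ) :
    u ⬝ᵥ (X *ᵥ Pi.single j 1) = (u ᵥ* X) j := by
  simp [Matrix.mulVec_single, Matrix.vecMul, dotProduct, mul_comm]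

lemma dot_sum_s10 {ι k : ℕ} (u : Fin k → ℝ) (f : Fin ι → Fin k → ℝ) :
    u ⬝ᵥ (∑ j : Fin ι, f j) = ∑ j : Fin ι, u ⬝ᵥ f j := by
  simp only [dotProduct, Finset.sum_apply, Finset.mul_sum]
  exact Finset.sum_comm

/-- For a self-adjoint PSD operator `M` on `ℝ^{k×n}` with temporal
reduction `Mtemp`, every `u ∈ ker Mtemp` satisfies `uᵀ M(E) = 0` for all `E`;
consequently the column space of `M(E)` is contained in the image of `Mtemp`. -/
theorem stmt_10 {k n : ℕ}
    (M : Matrix (Fin k) (Fin n) ℝ →ₗ[ℝ] Matrix (Fin k) (Fin n) ℝ)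
    (hsa : ∀ A B : Matrix (Fin k) (Fin n) ℝ, (Aᵀ * M B).trace = ((M A)ᵀ * B).trace)
    (hpsd : ∀ A : Matrix (Fin k) (Fin n) ℝ, 0 ≤ (Aᵀ * M A).trace)
    (Mtemp : Matrix (Fin k) (Fin k) ℝ)
    (hMtemp : ∀ u : Fin k → ℝ,
      Mtemp *ᵥ u = (1 / (n : ℝ)) •
        ∑ j : Fin n, (M (vecMulVec u (Pi.single j 1))) *ᵥ (Pi.single j 1)) :
    (∀ E : Matrix (Fin k) (Fin n) ℝ, ∀ u : Fin k → ℝ,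
        Mtemp *ᵥ u = 0 → u ᵥ* (M E) = 0) ∧
      ∀ E : Matrix (Fin k) (Fin n) ℝ,
        LinearMap.range (M E).mulVecLin ≤ LinearMap.range Mtemp.mulVecLin := by
  classical
  -- symmetric bilinear form
  set B : Matrix (Fin k) (Fin n) ℝ → Matrix (Fin k) (Fin n) ℝ → ℝ :=
    fun A C => (Aᵀ * M C).trace with hB
  have hBsymm : ∀ A C, B A C = B C A := by
    intro A C
    rw [hB]
    dsimp only
    rw [hsa, ← Matrix.trace_transpose, Matrix.transpose_mul, Matrix.transpose_transpose]
  -- Cauchy-Schwarz style: q(A)=0 → B(A,E)=0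
  have hCS : ∀ A E, B A A = 0 → B A E = 0 := by
    intro A E hA0
    have hexp : ∀ t : ℝ, 0 ≤ 2 * t * B A E + t ^ 2 * B E E := by
      intro t
      have h := hpsd (A + t • E)
      have hM : M (A + t • E) = M A + t • M E := by
        rw [map_add, LinearMap.map_smul]
      have hexpand : ((A + t • E)ᵀ * M (A + t • E)).trace
          = B A A + t * B A E + t * B E A + t ^ 2 * B E E := by
        rw [hM]
        simp only [Matrix.transpose_add, Matrix.transpose_smul,
          Matrix.add_mul, Matrix.mul_add, Matrix.smul_mul, Matrix.mul_smul,
          Matrix.trace_add, Matrix.trace_smul, smul_eq_mul, smul_smul, hB]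
        ring
      rw [hexpand, hA0, hBsymm E A] at h
      linarith
    have hc : 0 ≤ B E E := hpsd E
    set b := B A E with hb
    set c := B E E with hcdef
    have hc1 : (0:ℝ) < c + 1 := by linarith
    have hval : 2 * (-b / (c + 1)) * b + (-b / (c + 1)) ^ 2 * c
        = -(b ^ 2 * (c + 2)) / (c + 1) ^ 2 := by
      field_simp
      ring
    have h := hexp (-b / (c + 1))
    rw [hval] at h
    have hpow : (0:ℝ) < (c + 1) ^ 2 := by positivity
    have h2 : 0 ≤ -(b ^ 2 * (c + 2)) := by
      have := mul_nonneg h (le_of_lt hpow)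
      rwa [div_mul_cancel₀] at this
      exact ne_of_gt hpow
    nlinarith [sq_nonneg b]
  -- Part 1
  have part1 : ∀ E : Matrix (Fin k) (Fin n) ℝ, ∀ u : Fin k → ℝ,
      Mtemp *ᵥ u = 0 → u ᵥ* (M E) = 0 := by
    intro E u hu
    rcases Nat.eq_zero_or_pos n with hn | hn
    · subst hn; funext j; exact absurd j.2 (by simp)
    -- each q_j := B (u e_jᵀ) (u e_jᵀ) is zero
    have key : ∀ j : Fin n,
        B (vecMulVec u (Pi.single j 1)) (vecMulVec u (Pi.single j 1)) = 0 := by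
      have hnpos : (0:ℝ) < 1 / (n:ℝ) := by positivity
      have hdot : (0:ℝ) = (1 / (n : ℝ)) *
          ∑ j : Fin n, B (vecMulVec u (Pi.single j 1)) (vecMulVec u (Pi.single j 1)) := by
        have h1 := congrArg (fun w => u ⬝ᵥ w) ((hu.symm).trans (hMtemp u))
        simp only [dotProduct_zero, dotProduct_smul, smul_eq_mul] at h1
        rw [h1, dot_sum_s10]
        congr 1
        refine Finset.sum_congr rfl fun j _ => ?_
        rw [dot_mulVec_single, ← trace_vecMulVec_single]
      have hsum0 : ∑ j : Fin n,
          B (vecMulVec u (Pi.single j 1)) (vecMulVec u (Pi.single j 1)) = 0 := by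
        rcases mul_eq_zero.mp hdot.symm with h | h
        · exact absurd h (ne_of_gt hnpos)
        · exact h
      intro j
      have hterm : ∀ j ∈ Finset.univ, (0:ℝ) ≤
          B (vecMulVec u (Pi.single j 1)) (vecMulVec u (Pi.single j 1)) :=
        fun j _ => hpsd _
      exact (Finset.sum_eq_zero_iff_of_nonneg hterm).mp hsum0 j (Finset.mem_univ j)
    funext j
    have h := hCS (vecMulVec u (Pi.single j 1)) E (key j)
    rw [hB] at h
    dsimp only at h
    rw [trace_vecMulVec_single] at h
    simpa using h
  refine ⟨part1, ?_⟩
  -- Mtemp is symmetric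
  have hsymMtemp : Mtempᵀ = Mtemp := by
    have hbil : ∀ u v : Fin k → ℝ, v ⬝ᵥ (Mtemp *ᵥ u) = u ⬝ᵥ (Mtemp *ᵥ v) := by
      intro u v
      rw [hMtemp u, hMtemp v]
      simp only [dotProduct_smul, smul_eq_mul]
      rw [dot_sum_s10, dot_sum_s10]
      congr 1
      refine Finset.sum_congr rfl fun j _ => ?_
      rw [dot_mulVec_single, dot_mulVec_single, ← trace_vecMulVec_single,
        ← trace_vecMulVec_single]
      exact hBsymm (vecMulVec v (Pi.single j 1)) (vecMulVec u (Pi.single j 1))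
    ext i l
    have h := hbil (Pi.single l 1) (Pi.single i 1)
    simp only [Matrix.mulVec_single, mul_one] at h
    simpa [Matrix.transpose_apply, Pi.single_apply, dotProduct, Finset.sum_ite_eq',
      mul_comm] using h.symm
  -- vecMul by a kernel vector kills Mtemp
  have hker : ∀ z : Fin k → ℝ, Mtemp *ᵥ z = 0 → z ᵥ* Mtemp = 0 := by
    intro z hz
    rw [← hsymMtemp, Matrix.vecMul_transpose, hz]
  -- range ⊔ ker = ⊤
  have hdisj : Disjoint (LinearMap.range Mtemp.mulVecLin) (LinearMap.ker Mtemp.mulVecLin) := by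
    rw [Submodule.disjoint_def]
    intro z hzr hzk
    obtain ⟨w, hw⟩ := hzr
    have hw' : Mtemp *ᵥ w = z := hw
    have hzk' : Mtemp *ᵥ z = 0 := hzk
    have hz2 : z ⬝ᵥ z = 0 := by
      have : z ⬝ᵥ z = z ⬝ᵥ (Mtemp *ᵥ w) := by rw [hw']
      rw [this, Matrix.dotProduct_mulVec, hker z hzk', zero_dotProduct]
    exact dotProduct_self_eq_zero.mp hz2
  have hsup : LinearMap.range Mtemp.mulVecLin ⊔ LinearMap.ker Mtemp.mulVecLin = ⊤ :=
    Submodule.eq_top_of_disjoint _ _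
      (LinearMap.finrank_range_add_finrank_ker Mtemp.mulVecLin).ge hdisj
  intro E v hv
  obtain ⟨x, hx⟩ := hv
  have hmem : (M E) *ᵥ x ∈
      LinearMap.range Mtemp.mulVecLin ⊔ LinearMap.ker Mtemp.mulVecLin := by
    rw [hsup]; trivial
  rw [Submodule.mem_sup] at hmem
  obtain ⟨y, hy, z, hz, hyz⟩ := hmem
  have hz0 : Mtemp *ᵥ z = 0 := hz
  have hzy : z ⬝ᵥ y = 0 := by
    obtain ⟨w, hw⟩ := hy
    have hw' : Mtemp *ᵥ w = y := hw
    have : z ⬝ᵥ y = z ⬝ᵥ (Mtemp *ᵥ w) := by rw [hw']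
    rw [this, Matrix.dotProduct_mulVec, hker z hz0, zero_dotProduct]
  have hzv : z ⬝ᵥ ((M E) *ᵥ x) = 0 := by
    rw [Matrix.dotProduct_mulVec, part1 E z hz0, zero_dotProduct]
  have hzz : z ⬝ᵥ z = 0 := by
    have h : z ⬝ᵥ (y + z) = 0 := by rw [hyz]; exact hzv
    rw [dotProduct_add, hzy, zero_add] at h
    exact h
  have hz0' : z = 0 := dotProduct_self_eq_zero.mp hzz
  rw [← hx]
  show (M E) *ᵥ x ∈ _
  rw [← hyz, hz0', add_zero]
  exact hy
end
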